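/- arXiv:2110.06778 — 4 statements merged into one kernel-verified Lean document; each statement's English description precedes it below -/
import Mathlib

section
/- Define p_h(k,l) = C(n+1, h+1) − Σ_{j≥0} C(k+1, k+j+1)·C(n−k, h−l−j), where C(n,k) is the binomial coefficient extended to all integers via (1+x)^n = Σ_k C(n,k) x^k (so C(n,k) = 0 for k < 0 or k > n when n ≥ 0). Then p_h(k,l) ≥ 0 for all integers 0 ≤ l ≤ k ≤ n and 0 ≤ h ≤ n. -/
/-!
Since `C(k+1, k+j+1)` is `1` for `j = 0` and `0` for `j > 0`, the sum in `p_h(k,l)` collapses to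
`C(n-k, h-l)`. Raising both arguments by `l+1` (Pascal's rule) and then the upper one by `k-l`
shows `C(n-k, h-l) ≤ C(n+1, h+1)`.
-/

def genBinom (n k : ℤ) : ℤ :=
  if k < 0 then 0
  else if 0 ≤ n then (n.toNat.choose k.toNat : ℤ)
  else (-1) ^ k.toNat * ((k - n - 1).toNat.choose k.toNat : ℤ)

noncomputable def ahlforsP (n h k l : ℤ) : ℤ :=
  genBinom (n + 1) (h + 1) -
    ∑ᶠ j : ℕ, genBinom (k + 1) (k + (j : ℤ) + 1) * genBinom (n - k) (h - l - (j : ℤ))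

theorem Nat.choose_le_choose_add_add (a b m : ℕ) : a.choose b ≤ (a + m).choose (b + m) := by
  induction m with
  | zero => rfl
  | succ m ih =>
    rw [← add_assoc, ← add_assoc, Nat.choose_succ_succ]
    exact ih.trans (Nat.le_add_right _ _)

theorem genBinom_of_neg (n : ℤ) {k : ℤ} (hk : k < 0) : genBinom n k = 0 := if_pos hk

theorem genBinom_natCast (a b : ℕ) : genBinom a b = a.choose b := by
  simp [genBinom]

theorem genBinom_nonneg {n : ℤ} (hn : 0 ≤ n) (k : ℤ) : 0 ≤ genBinom n k := by
  unfold genBinom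
  split_ifs <;> positivity

theorem genBinom_natCast_self_add (m j : ℕ) :
    genBinom m (m + j) = if j = 0 then 1 else 0 := by
  rw [← Nat.cast_add, genBinom_natCast]
  split_ifs with hj
  · simp [hj]
  · exact_mod_cast Nat.choose_eq_zero_of_lt (by omega)

theorem ahlforsP_eq_sub {n h k l : ℤ} (hk : 0 ≤ k + 1) :
    ahlforsP n h k l = genBinom (n + 1) (h + 1) - genBinom (n - k) (h - l) := by
  obtain ⟨m, hm⟩ : ∃ m : ℕ, k + 1 = m := ⟨(k + 1).toNat, by omega⟩
  have hcoeff (j : ℕ) : genBinom (k + 1) (k + j + 1) = if j = 0 then 1 else 0 := by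
    rw [add_right_comm, hm, genBinom_natCast_self_add]
  rw [ahlforsP, finsum_eq_single _ 0 fun j hj => by simp [hcoeff, hj], hcoeff]
  simp

theorem genBinom_sub_le_genBinom_add_one {n h k l : ℤ} (hl : 0 ≤ l) (hlk : l ≤ k)
    (hkn : k ≤ n) : genBinom (n - k) (h - l) ≤ genBinom (n + 1) (h + 1) := by
  rcases lt_or_ge (h - l) 0 with hneg | hpos
  · rw [genBinom_of_neg _ hneg]
    exact genBinom_nonneg (by omega) _
  obtain ⟨a, ha⟩ : ∃ a : ℕ, n - k = a := ⟨(n - k).toNat, by omega⟩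
  obtain ⟨b, hb⟩ : ∃ b : ℕ, h - l = b := ⟨(h - l).toNat, by omega⟩
  obtain ⟨m, hm⟩ : ∃ m : ℕ, l + 1 = m := ⟨(l + 1).toNat, by omega⟩
  obtain ⟨i, hi⟩ : ∃ i : ℕ, k - l = i := ⟨(k - l).toNat, by omega⟩
  have hn : n + 1 = ((a + m + i : ℕ) : ℤ) := by push_cast; omega
  have hh : h + 1 = ((b + m : ℕ) : ℤ) := by push_cast; omega
  rw [ha, hb, hn, hh, genBinom_natCast, genBinom_natCast]
  exact_mod_cast (Nat.choose_le_choose_add_add a b m).trans (Nat.choose_le_add _ _ _)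

theorem ahlforsP_nonneg_general (n h k l : ℤ) (hl : 0 ≤ l) (hlk : l ≤ k) (hkn : k ≤ n) :
    0 ≤ ahlforsP n h k l := by
  rw [ahlforsP_eq_sub (by omega)]
  exact sub_nonneg.mpr (genBinom_sub_le_genBinom_add_one hl hlk hkn)

/-- **Non-negativity of Ahlfors' coefficients:** `p_h(k,l) ≥ 0` for all integers
`0 ≤ l ≤ k ≤ n` and `0 ≤ h ≤ n`. -/
theorem ahlforsP_nonneg (n h k l : ℤ) (hl : 0 ≤ l) (hlk : l ≤ k) (hkn : k ≤ n)
    (hh : 0 ≤ h) (hhn : h ≤ n) : 0 ≤ ahlforsP n h k l :=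
  ahlforsP_nonneg_general n h k l hl hlk hkn
end

section
/- Assume Borel's theorem: a holomorphic curve f : ℂ → Pⁿ omitting n+2 hyperplanes in general position is linearly degenerate (its image lies in a proper projective subspace). Then any holomorphic curve f : ℂ → Pⁿ omitting 2n+1 hyperplanes in general position is constant. -/
/-- Hyperplanes in `Pⁿ`, given by their coefficient vectors, are in *general position*
if any `n+1` of them are linearly independent (equivalently, any `n+1` of the
hyperplanes have empty intersection in `Pⁿ`). -/
def InGeneralPosition {n q : ℕ} (A : Fin q → (Fin (n + 1) → ℂ)) : Prop :=
  ∀ s : Finset (Fin q), s.card = n + 1 →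
    LinearIndependent ℂ (fun i : s => A i)

open Finset

lemma genpos_aux (m : ℕ) :
    InGeneralPosition (fun j : Fin (m + 2) => fun i : Fin (m + 1) =>
      if (j : ℕ) = m + 1 then (1 : ℂ) else if (j : ℕ) = (i : ℕ) then 1 else 0) := by
  classical
  intro s hs
  set B : Fin (m + 2) → Fin (m + 1) → ℂ := fun j i =>
    if (j : ℕ) = m + 1 then (1 : ℂ) else if (j : ℕ) = (i : ℕ) then 1 else 0 with hB
  rw [Fintype.linearIndependent_iff]
  intro g hg
  set G : Fin (m + 2) → ℂ := fun j => if hj : j ∈ s then g ⟨j, hj⟩ else 0 with hG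
  have hGs : ∀ j : Fin (m + 2), j ∉ s → G j = 0 := fun j hj => dif_neg hj
  have hsum : ∀ i : Fin (m + 1), ∑ j : Fin (m + 2), G j * B j i = 0 := by
    intro i
    have h1 : ∑ j : Fin (m + 2), G j * B j i = ∑ j ∈ s, G j * B j i := by
      apply (Finset.sum_subset (Finset.subset_univ s) _).symm
      intro x _ hx; rw [hGs x hx, zero_mul]
    have h2 : ∑ j ∈ s, G j * B j i = ∑ j : s, G j * B j i := (Finset.sum_coe_sort s _).symm
    have h3 : (∑ j : s, g j • B j) i = 0 := by rw [hg]; rfl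
    rw [h1, h2]
    rw [Finset.sum_apply] at h3
    rw [← h3]
    apply Finset.sum_congr rfl
    intro x _
    simp [hG, Pi.smul_apply, smul_eq_mul, x.2]
  -- evaluate the sum
  have key : ∀ i : Fin (m + 1), G i.castSucc + G (Fin.last (m + 1)) = 0 := by
    intro i
    have hthis := hsum i
    rw [Fin.sum_univ_castSucc] at hthis
    have hlast : G (Fin.last (m + 1)) * B (Fin.last (m + 1)) i = G (Fin.last (m + 1)) := by
      simp [hB, Fin.val_last]
    have hrest : ∀ j : Fin (m + 1), G j.castSucc * B j.castSucc i
        = if j = i then G j.castSucc else 0 := by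
      intro j
      have hjm : (j : ℕ) ≠ m + 1 := Nat.ne_of_lt j.isLt
      by_cases hji : j = i
      · subst hji; simp [hB, hjm, Fin.coe_castSucc]
      · have hvne : (j : ℕ) ≠ (i : ℕ) := fun h => hji (Fin.ext h)
        simp [hB, hjm, Fin.coe_castSucc, hvne, hji]
    rw [hlast] at hthis
    calc G i.castSucc + G (Fin.last (m + 1))
        = (∑ j : Fin (m + 1), G j.castSucc * B j.castSucc i) + G (Fin.last (m + 1)) := by
          congr 1
          rw [Finset.sum_congr rfl (fun j _ => hrest j), Finset.sum_ite_eq' univ i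
            (fun j => G j.castSucc)]
          simp
      _ = 0 := hthis
  -- some element is missing from s
  obtain ⟨j₀, hj₀⟩ : ∃ j₀ : Fin (m + 2), j₀ ∉ s := by
    by_contra h
    push_neg at h
    have := hs
    rw [Finset.eq_univ_iff_forall.mpr h, Finset.card_univ, Fintype.card_fin] at this
    omega
  have hlast0 : G (Fin.last (m + 1)) = 0 := by
    rcases Fin.eq_castSucc_or_eq_last j₀ with ⟨j, rfl⟩ | rfl
    · have := key j
      rw [hGs _ hj₀, zero_add] at this
      exact this
    · exact hGs _ hj₀
  have hall : ∀ j : Fin (m + 2), G j = 0 := by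
    intro j
    rcases Fin.eq_castSucc_or_eq_last j with ⟨j', rfl⟩ | rfl
    · have := key j'
      rw [hlast0, add_zero] at this
      exact this
    · exact hlast0
  intro x
  have := hall x
  rw [hG] at this
  simpa [dif_pos x.2] using this

def BorelHyp : Prop :=
  ∀ (m : ℕ) (G : ℂ → (Fin (m + 1) → ℂ)),
      (∀ i, Differentiable ℂ (fun z => G z i)) →
      (∀ z, G z ≠ 0) →
      ∀ B : Fin (m + 2) → (Fin (m + 1) → ℂ), InGeneralPosition B →
      (∀ j z, ∑ i, B j i * G z i ≠ 0) →
      ∃ c : Fin (m + 1) → ℂ, c ≠ 0 ∧ ∀ z, ∑ i, c i * G z i = 0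

lemma li_coeffs {q k : ℕ} (A : Fin q → (Fin k → ℂ)) (s : Finset (Fin q))
    (h : LinearIndependent ℂ (fun i : s => A i)) (a : Fin q → ℂ)
    (hsum : ∑ x ∈ s, a x • A x = 0) : ∀ x ∈ s, a x = 0 := by
  have h2 : ∑ i : s, a i • A i = 0 := by
    rw [Finset.sum_coe_sort s (fun x => a x • A x)]; exact hsum
  have := Fintype.linearIndependent_iff.mp h (fun i => a i) h2
  intro x hx
  exact this ⟨x, hx⟩

lemma borel_step (hB : BorelHyp) {ι : Type} [DecidableEq ι] (s : Finset ι)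
    (h : ι → ℂ → ℂ) (hd : ∀ i ∈ s, Differentiable ℂ (h i))
    (hz : ∀ i ∈ s, ∀ z, h i z ≠ 0) (hsum : ∀ z, ∑ i ∈ s, h i z = 0)
    (j₀ : ι) (hj₀ : j₀ ∈ s) (hc : 3 ≤ s.card) :
    ∃ a : ι → ℂ, (∀ x, a x ≠ 0 → x ∈ s.erase j₀) ∧ (∃ x ∈ s.erase j₀, a x ≠ 0) ∧
      (∀ z, ∑ x ∈ s.erase j₀, a x * h x z = 0) := by
  classical
  set s' := s.erase j₀ with hs'
  have hsub : s' ⊆ s := Finset.erase_subset j₀ s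
  have hcs' : s'.card = s.card - 1 := Finset.card_erase_of_mem hj₀
  obtain ⟨m, hm⟩ : ∃ m : ℕ, s'.card = m + 1 := ⟨s'.card - 1, by omega⟩
  set E : Fin (m + 1) ≃ s' := (s'.equivFin.trans (finCongr hm)).symm with hE
  set G : ℂ → Fin (m + 1) → ℂ := fun z i => h ((E i) : ι) z with hGdef
  have hsum' : ∀ z, ∑ x ∈ s', h x z = - h j₀ z := by
    intro z
    have := Finset.add_sum_erase s (fun x => h x z) hj₀
    rw [hsum z] at this
    linear_combination this
  have hsumFin : ∀ (f : ι → ℂ), ∑ i : Fin (m + 1), f ((E i) : ι) = ∑ x ∈ s', f x := by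
    intro f
    rw [← Finset.sum_coe_sort s' f]
    exact Equiv.sum_comp E (fun x : s' => f (x : ι))
  have hGd : ∀ i, Differentiable ℂ (fun z => G z i) :=
    fun i => hd _ (hsub (E i).2)
  have hGnz : ∀ z, G z ≠ 0 := by
    intro z hz0
    have := congrFun hz0 ⟨0, Nat.succ_pos m⟩
    exact hz _ (hsub (E ⟨0, Nat.succ_pos m⟩).2) z this
  set B : Fin (m + 2) → Fin (m + 1) → ℂ := fun j i =>
    if (j : ℕ) = m + 1 then (1 : ℂ) else if (j : ℕ) = (i : ℕ) then 1 else 0 with hBdef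
  have homit : ∀ j z, ∑ i, B j i * G z i ≠ 0 := by
    intro j z
    by_cases hjm : (j : ℕ) = m + 1
    · have : ∑ i, B j i * G z i = ∑ i, G z i := by
        apply Finset.sum_congr rfl; intro i _; simp [hBdef, hjm]
      rw [this, hsumFin (fun x => h x z), hsum' z]
      simpa using hz j₀ hj₀ z
    · have hjlt : (j : ℕ) < m + 1 := by omega
      have : ∑ i, B j i * G z i = G z ⟨(j : ℕ), hjlt⟩ := by
        rw [Finset.sum_eq_single (⟨(j : ℕ), hjlt⟩ : Fin (m + 1))]
        · simp [hBdef, hjm]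
        · intro i _ hi
          have : (j : ℕ) ≠ (i : ℕ) := fun hh => hi (by apply Fin.ext; simp [← hh])
          simp [hBdef, hjm, this]
        · intro hmem; exact absurd (Finset.mem_univ _) hmem
      rw [this]
      exact hz _ (hsub (E _).2) z
  obtain ⟨c, hc0, hcrel⟩ := hB m G hGd hGnz B (genpos_aux m) homit
  set a : ι → ℂ := fun x => if hx : x ∈ s' then c (E.symm ⟨x, hx⟩) else 0 with hadef
  have haE : ∀ i : Fin (m + 1), a ((E i) : ι) = c i := by
    intro i
    rw [hadef]
    simp only [dif_pos (E i).2]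
    congr 1
    rw [Subtype.coe_eta]
    exact E.symm_apply_apply i
  refine ⟨a, ?_, ?_, ?_⟩
  · intro x hx
    by_contra hxs
    exact hx (dif_neg hxs)
  · obtain ⟨i, hi⟩ := Function.ne_iff.mp hc0
    exact ⟨((E i) : ι), (E i).2, by rw [haE i]; exact hi⟩
  · intro z
    rw [← hsumFin (fun x => a x * h x z)]
    rw [← hcrel z]
    apply Finset.sum_congr rfl
    intro i _
    rw [haE i]

lemma units_lemma (hB : BorelHyp) {ι : Type} [DecidableEq ι] :
    ∀ (N : ℕ) (s : Finset ι) (h : ι → ℂ → ℂ), s.card ≤ N →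
      (∀ i ∈ s, Differentiable ℂ (h i)) → (∀ i ∈ s, ∀ z, h i z ≠ 0) →
      (∀ z, ∑ i ∈ s, h i z = 0) →
      ∀ j ∈ s, ∃ j' ∈ s, j' ≠ j ∧ ∃ r : ℂ, ∀ z, h j z = r * h j' z := by
  intro N
  induction N with
  | zero =>
    intro s h hcard _ _ _ j hj
    have : s = ∅ := Finset.card_eq_zero.mp (Nat.le_zero.mp hcard)
    rw [this] at hj
    exact absurd hj (Finset.notMem_empty j)
  | succ N IH =>
    intro s h hcard hd hz hsum j hj
    by_cases hcN : s.card ≤ N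
    · exact IH s h hcN hd hz hsum j hj
    rcases lt_or_ge s.card 3 with hlt | hge
    · -- small cases
      have hpos : 1 ≤ s.card := Finset.card_pos.mpr ⟨j, hj⟩
      rcases Nat.lt_or_ge s.card 2 with h1 | h2
      · -- card 1
        have : s.card = 1 := by omega
        obtain ⟨x, hx⟩ := Finset.card_eq_one.mp this
        have hjx : j = x := by rw [hx] at hj; exact Finset.mem_singleton.mp hj
        have := hsum 0
        rw [hx, Finset.sum_singleton] at this
        exact absurd this (hz x (by rw [hx]; exact Finset.mem_singleton_self x) 0)
      · -- card 2
        have : s.card = 2 := by omega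
        obtain ⟨x, y, hxy, hs⟩ := Finset.card_eq_two.mp this
        have hsumz : ∀ z, h x z + h y z = 0 := by
          intro z
          have := hsum z
          rw [hs, Finset.sum_pair hxy] at this
          exact this
        rcases Finset.mem_insert.mp (by rw [hs] at hj; exact hj) with rfl | hjy
        · exact ⟨y, by rw [hs]; simp, fun e => hxy e.symm, -1, fun z => by
            have := hsumz z; linear_combination this⟩
        · have hjy' : j = y := Finset.mem_singleton.mp hjy
          subst hjy'
          exact ⟨x, by rw [hs]; simp, hxy, -1, fun z => by
            have := hsumz z; linear_combination this⟩
    · -- main case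
      classical
      obtain ⟨j₀, hj₀e⟩ : (s.erase j).Nonempty := by
        rw [← Finset.card_pos, Finset.card_erase_of_mem hj]; omega
      have hj₀s : j₀ ∈ s := Finset.mem_of_mem_erase hj₀e
      have hj₀j : j₀ ≠ j := Finset.ne_of_mem_erase hj₀e
      obtain ⟨a, hasupp, ⟨x₁, hx₁e, hx₁⟩, harel⟩ :=
        borel_step hB s h hd hz hsum j₀ hj₀s hge
      set T := (s.erase j₀).filter (fun x => a x ≠ 0) with hT
      have hTe : T ⊆ s.erase j₀ := Finset.filter_subset _ _
      have hTs : T ⊆ s := hTe.trans (Finset.erase_subset _ _)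
      have hrelT : ∀ z, ∑ x ∈ T, a x * h x z = 0 := by
        intro z
        rw [← harel z]
        apply Finset.sum_subset hTe
        intro x hxe hxT
        have : a x = 0 := by
          by_contra hne
          exact hxT (Finset.mem_filter.mpr ⟨hxe, hne⟩)
        rw [this, zero_mul]
      have hTcard : T.card ≤ N := by
        have := Finset.card_le_card hTe
        rw [Finset.card_erase_of_mem hj₀s] at this
        omega
      by_cases hjT : j ∈ T
      · obtain ⟨j', hj'T, hne, r, hr⟩ := IH T (fun x z => a x * h x z) hTcard
          (fun i hi => (hd i (hTs hi)).const_mul (a i))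
          (fun i hi z => mul_ne_zero (Finset.mem_filter.mp hi).2 (hz i (hTs hi) z))
          hrelT j hjT
        have haj : a j ≠ 0 := (Finset.mem_filter.mp hjT).2
        refine ⟨j', hTs hj'T, hne, (a j)⁻¹ * (r * a j'), fun z => ?_⟩
        have := hr z
        field_simp
        linear_combination this
      · -- j not in T
        have hjs' : j ∈ s.erase j₀ := Finset.mem_erase.mpr ⟨fun e => hj₀j e.symm, hj⟩
        have haj : a j = 0 := by
          by_contra hne
          exact hjT (Finset.mem_filter.mpr ⟨hjs', hne⟩)
        have hx₁T : x₁ ∈ T := Finset.mem_filter.mpr ⟨hx₁e, hx₁⟩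
        have hx₁j : x₁ ≠ j := fun e => hjT (e ▸ hx₁T)
        set b : ι → ℂ := fun x => 1 - (a x₁)⁻¹ * a x with hbdef
        have hbj : b j = 1 := by simp [hbdef, haj]
        have hbx₁ : b x₁ = 0 := by
          simp only [hbdef]
          rw [inv_mul_cancel₀ hx₁, sub_self]
        have haj₀ : a j₀ = 0 := by
          by_contra hne
          exact absurd (hasupp j₀ hne) (Finset.notMem_erase j₀ s)
        have harels : ∀ z, ∑ x ∈ s, a x * h x z = 0 := by
          intro z
          rw [← Finset.add_sum_erase s (fun x => a x * h x z) hj₀s, harel z, haj₀]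
          ring
        have hrelb : ∀ z, ∑ x ∈ s, b x * h x z = 0 := by
          intro z
          have e1 : ∑ x ∈ s, b x * h x z
              = ∑ x ∈ s, (h x z - (a x₁)⁻¹ * (a x * h x z)) := by
            apply Finset.sum_congr rfl
            intro x _
            rw [hbdef]
            ring
          rw [e1, Finset.sum_sub_distrib, hsum z, ← Finset.mul_sum, harels z,
            mul_zero, sub_zero]
        set S' := s.filter (fun x => b x ≠ 0) with hS'
        have hjS' : j ∈ S' := Finset.mem_filter.mpr ⟨hj, by rw [hbj]; exact one_ne_zero⟩
        have hS'sub : S' ⊆ s.erase x₁ := by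
          intro x hxS'
          obtain ⟨hxs, hbx⟩ := Finset.mem_filter.mp hxS'
          refine Finset.mem_erase.mpr ⟨fun e => hbx (e ▸ hbx₁), hxs⟩
        have hS'card : S'.card ≤ N := by
          have := Finset.card_le_card hS'sub
          rw [Finset.card_erase_of_mem (hTs hx₁T)] at this
          omega
        have hS's : S' ⊆ s := Finset.filter_subset _ _
        have hrelS' : ∀ z, ∑ x ∈ S', b x * h x z = 0 := by
          intro z
          rw [← hrelb z]
          apply Finset.sum_subset hS's
          intro x hxs hxS'
          have : b x = 0 := by
            by_contra hne
            exact hxS' (Finset.mem_filter.mpr ⟨hxs, hne⟩)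
          rw [this, zero_mul]
        obtain ⟨j', hj'S', hne, r, hr⟩ := IH S' (fun x z => b x * h x z) hS'card
          (fun i hi => (hd i (hS's hi)).const_mul (b i))
          (fun i hi z => mul_ne_zero (Finset.mem_filter.mp hi).2 (hz i (hS's hi) z))
          hrelS' j hjS'
        refine ⟨j', hS's hj'S', hne, r * b j', fun z => ?_⟩
        have := hr z
        rw [hbj, one_mul] at this
        rw [this]
        ring

lemma exists_rel {n : ℕ} (A : Fin (2 * n + 1) → (Fin (n + 1) → ℂ))
    (hgen : InGeneralPosition A) (S : Finset (Fin (2 * n + 1))) (hS : S.card = n + 2) :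
    ∃ a : Fin (2 * n + 1) → ℂ, (∀ x ∈ S, a x ≠ 0) ∧ (∀ x, x ∉ S → a x = 0) ∧
      ∑ x ∈ S, a x • A x = 0 := by
  classical
  have hnli : ¬ LinearIndependent ℂ (fun i : S => A i) := by
    intro hli
    have := hli.fintype_card_le_finrank
    rw [Fintype.card_coe, hS, Module.finrank_pi, Fintype.card_fin] at this
    omega
  obtain ⟨g, hg0, i0, hi0⟩ := Fintype.not_linearIndependent_iff.mp hnli
  set a : Fin (2 * n + 1) → ℂ := fun x => if hx : x ∈ S then g ⟨x, hx⟩ else 0 with ha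
  have hamem : ∀ (x) (hx : x ∈ S), a x = g ⟨x, hx⟩ := fun x hx => dif_pos hx
  have hsum : ∑ x ∈ S, a x • A x = 0 := by
    rw [← Finset.sum_coe_sort S (fun x => a x • A x)]
    rw [← hg0]
    apply Finset.sum_congr rfl
    intro x _
    rw [hamem x x.2, Subtype.coe_eta]
  refine ⟨a, ?_, fun x hx => dif_neg hx, hsum⟩
  intro x₁ hx₁ hax₁
  -- if some coefficient on S vanishes, all must vanish, contradicting hi0
  have hcard' : (S.erase x₁).card = n + 1 := by
    rw [Finset.card_erase_of_mem hx₁, hS]; omega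
  have hli' := hgen (S.erase x₁) hcard'
  have hsum' : ∑ x ∈ S.erase x₁, a x • A x = 0 := by
    rw [← Finset.add_sum_erase S (fun x => a x • A x) hx₁, hax₁, zero_smul, zero_add] at hsum
    exact hsum
  have hzero := li_coeffs A (S.erase x₁) hli' a hsum'
  apply hi0
  rw [← hamem i0 i0.2]
  by_cases hne : (i0 : Fin (2 * n + 1)) = x₁
  · rw [hne]; exact hax₁
  · exact hzero i0 (Finset.mem_erase.mpr ⟨hne, i0.2⟩)


/-- **Montel's corollary of Borel's theorem.** Assume Borel's theorem: a holomorphic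
curve in `Pᵐ` (given by a homogeneous representation, entire functions with no common
zero) omitting `m+2` hyperplanes in general position is linearly degenerate. Then a
holomorphic curve in `Pⁿ` omitting `2n+1` hyperplanes in general position is constant. -/
theorem constant_from_borel (n : ℕ) (hn : 1 ≤ n)
    (hBorel : ∀ (m : ℕ) (G : ℂ → (Fin (m + 1) → ℂ)),
      (∀ i, Differentiable ℂ (fun z => G z i)) →
      (∀ z, G z ≠ 0) →
      ∀ B : Fin (m + 2) → (Fin (m + 1) → ℂ), InGeneralPosition B →
      (∀ j z, ∑ i, B j i * G z i ≠ 0) →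
      ∃ c : Fin (m + 1) → ℂ, c ≠ 0 ∧ ∀ z, ∑ i, c i * G z i = 0)
    (F : ℂ → (Fin (n + 1) → ℂ))
    (hent : ∀ i, Differentiable ℂ (fun z => F z i))
    (hnz : ∀ z, F z ≠ 0)
    (A : Fin (2 * n + 1) → (Fin (n + 1) → ℂ)) (hgen : InGeneralPosition A)
    (homit : ∀ j z, ∑ i, A j i * F z i ≠ 0) :
    ∀ z w : ℂ, ∃ lam : ℂ, lam ≠ 0 ∧ F z = lam • F w := by
  classical
  have hB : BorelHyp := hBorel
  haveI : NeZero (2 * n + 1) := ⟨by omega⟩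
  set ψ : Fin (2 * n + 1) → ℂ → ℂ := fun j z => ∑ i, A j i * F z i with hψ
  have hψd : ∀ j, Differentiable ℂ (ψ j) := by
    intro j
    apply Differentiable.fun_sum
    intro i _
    exact (hent i).const_mul (A j i)
  have hψz : ∀ j z, ψ j z ≠ 0 := homit
  -- Step A: in any subset of size n+2, each ψ j is a constant multiple of another one
  have stepA : ∀ S : Finset (Fin (2 * n + 1)), S.card = n + 2 → ∀ j ∈ S,
      ∃ j' ∈ S, j' ≠ j ∧ ∃ r : ℂ, ∀ z, ψ j z = r * ψ j' z := by
    intro S hS j hj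
    obtain ⟨a, ha0, hasupp, harel⟩ := exists_rel A hgen S hS
    have hψrel : ∀ z, ∑ x ∈ S, a x * ψ x z = 0 := by
      intro z
      have hcoord : ∀ i, ∑ x ∈ S, a x * A x i = 0 := by
        intro i
        have := congrFun harel i
        simpa [Finset.sum_apply] using this
      calc ∑ x ∈ S, a x * ψ x z = ∑ x ∈ S, ∑ i, (a x * A x i) * F z i := by
            apply Finset.sum_congr rfl
            intro x _
            rw [hψ, Finset.mul_sum]
            apply Finset.sum_congr rfl
            intro i _
            ring
        _ = ∑ i, ∑ x ∈ S, (a x * A x i) * F z i := Finset.sum_comm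
        _ = ∑ i, (∑ x ∈ S, a x * A x i) * F z i := by
            apply Finset.sum_congr rfl
            intro i _
            rw [Finset.sum_mul]
        _ = 0 := by
            apply Finset.sum_eq_zero
            intro i _
            rw [hcoord i, zero_mul]
    obtain ⟨j', hj'S, hne, r, hr⟩ := units_lemma hB (n + 2) S (fun x z => a x * ψ x z)
      (le_of_eq hS)
      (fun i hi => (hψd i).const_mul (a i))
      (fun i hi z => mul_ne_zero (ha0 i hi) (hψz i z))
      hψrel j hj
    have haj : a j ≠ 0 := ha0 j hj
    refine ⟨j', hj'S, hne, (a j)⁻¹ * (r * a j'), fun z => ?_⟩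
    have := hr z
    field_simp
    linear_combination this
  -- Step B: the ratio-class of index 0 has at least n+1 elements
  set C : Finset (Fin (2 * n + 1)) :=
    Finset.univ.filter (fun j' => ∃ r : ℂ, ∀ z, ψ j' z = r * ψ 0 z) with hC
  have h0C : (0 : Fin (2 * n + 1)) ∈ C :=
    Finset.mem_filter.mpr ⟨Finset.mem_univ _, 1, fun z => (one_mul _).symm⟩
  have hCcard : n + 1 ≤ C.card := by
    by_contra hlt
    push_neg at hlt
    have hcompl : n + 1 ≤ Cᶜ.card := by
      rw [Finset.card_compl, Fintype.card_fin]
      omega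
    obtain ⟨D, hDsub, hDcard⟩ := Finset.exists_subset_card_eq hcompl
    have h0D : (0 : Fin (2 * n + 1)) ∉ D := by
      intro h0
      exact (Finset.mem_compl.mp (hDsub h0)) h0C
    set S := insert (0 : Fin (2 * n + 1)) D with hSdef
    have hScard : S.card = n + 2 := by
      rw [hSdef, Finset.card_insert_of_notMem h0D, hDcard]
    obtain ⟨j', hj'S, hne, r, hr⟩ := stepA S hScard 0 (Finset.mem_insert_self _ _)
    have hj'D : j' ∈ D := by
      rcases Finset.mem_insert.mp hj'S with rfl | hD
      · exact absurd rfl hne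
      · exact hD
    have hj'nC : j' ∉ C := Finset.mem_compl.mp (hDsub hj'D)
    apply hj'nC
    have hr0 : r ≠ 0 := by
      intro h0
      have := hr 0
      rw [h0, zero_mul] at this
      exact hψz 0 0 this
    refine Finset.mem_filter.mpr ⟨Finset.mem_univ _, r⁻¹, fun z => ?_⟩
    rw [hr z, ← mul_assoc, inv_mul_cancel₀ hr0, one_mul]
  obtain ⟨T, hTC, hTcard⟩ := Finset.exists_subset_card_eq hCcard
  have hTr : ∀ j ∈ T, ∃ r : ℂ, r ≠ 0 ∧ ∀ z, ψ j z = r * ψ 0 z := by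
    intro j hj
    obtain ⟨r, hr⟩ := (Finset.mem_filter.mp (hTC hj)).2
    refine ⟨r, ?_, hr⟩
    intro h0
    have := hr 0
    rw [h0, zero_mul] at this
    exact hψz j 0 this
  -- Step C: conclude
  intro z w
  refine ⟨ψ 0 z / ψ 0 w, div_ne_zero (hψz 0 z) (hψz 0 w), ?_⟩
  set lam := ψ 0 z / ψ 0 w with hlam
  set u : Fin (n + 1) → ℂ := fun i => F z i - lam * F w i with hu
  have hAu : ∀ j ∈ T, ∑ i, A j i * u i = 0 := by
    intro j hj
    obtain ⟨r, hr0, hr⟩ := hTr j hj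
    have e1 : ∑ i, A j i * u i = ψ j z - lam * ψ j w := by
      rw [hψ, hu, Finset.mul_sum, ← Finset.sum_sub_distrib]
      apply Finset.sum_congr rfl
      intro i _
      ring
    rw [e1, hr z, hr w, hlam]
    field_simp [hψz 0 w]
    ring
  -- linear algebra: the A j for j ∈ T form a basis
  have hli := hgen T hTcard
  haveI : Nonempty { x // x ∈ T } := by
    rw [Finset.nonempty_coe_sort]
    rw [← Finset.card_pos, hTcard]
    omega
  have hspan : Submodule.span ℂ (Set.range (fun j : T => A j)) = ⊤ := by
    apply hli.span_eq_top_of_card_eq_finrank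
    rw [Fintype.card_coe, hTcard, Module.finrank_pi, Fintype.card_fin]
  set φ : (Fin (n + 1) → ℂ) →ₗ[ℂ] ℂ :=
    { toFun := fun v => ∑ i, v i * u i
      map_add' := by
        intro v₁ v₂
        simp only [Pi.add_apply, add_mul]
        rw [Finset.sum_add_distrib]
      map_smul' := by
        intro c v
        simp only [Pi.smul_apply, smul_eq_mul, RingHom.id_apply]
        rw [Finset.mul_sum]
        apply Finset.sum_congr rfl
        intro i _
        ring } with hφ
  have hker : ∀ v, φ v = 0 := by
    have hle : Submodule.span ℂ (Set.range (fun j : T => A j)) ≤ LinearMap.ker φ := by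
      apply Submodule.span_le.mpr
      rintro _ ⟨j, rfl⟩
      exact LinearMap.mem_ker.mpr (hAu j j.2)
    rw [hspan] at hle
    intro v
    exact LinearMap.mem_ker.mp (hle (Submodule.mem_top))
  have hu0 : ∀ i, u i = 0 := by
    intro i
    have := hker (Pi.single i 1)
    rw [hφ] at this
    simp only [LinearMap.coe_mk, AddHom.coe_mk] at this
    rw [Finset.sum_eq_single i (fun k _ hk => by simp [Pi.single_apply, hk]) 
      (fun hmem => absurd (Finset.mem_univ i) hmem)] at this
    simpa using this
  funext i
  have := hu0 i
  rw [hu] at this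
  have : F z i = lam * F w i := by linear_combination this
  rw [this]
  simp
end

section
/- Let ds = p(z)|dz| be a conformal metric on the unit disk with p continuous and positive, and suppose at every point z₀ of the disk there exists a supporting metric ds' = p'(z)|dz| (i.e., p' is C² near z₀, p'(z₀) = p(z₀), and p'(z) ≤ p(z) near z₀) whose Gaussian curvature −(p')^{-2} Δ log p' is ≤ −1 at z₀. Then p(z) ≤ 2/(1−|z|²) for all z in the unit disk, i.e., ds is dominated by the Poincaré metric dσ = 2|dz|/(1−|z|²). -/
open Metric

/-- The Laplacian of a function `u : ℂ → ℝ`: `Δu = u_xx + u_yy`. -/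
noncomputable def laplacian (u : ℂ → ℝ) (z : ℂ) : ℝ :=
  fderiv ℝ (fun w => fderiv ℝ u w 1) z 1
    + fderiv ℝ (fun w => fderiv ℝ u w Complex.I) z Complex.I

/-- The Gaussian curvature `−p⁻² Δ log p` of the conformal metric `ds = p(z)|dz|`. -/
noncomputable def gaussCurvature (p : ℂ → ℝ) (z : ℂ) : ℝ :=
  -(p z)⁻¹ ^ 2 * laplacian (fun w => Real.log (p w)) z

open Filter

/-- Necessary second-order condition at an interior local max, 1-dimensional version. -/
lemma second_deriv_nonpos_1d {g : ℝ → ℝ} {A : ℝ}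
    (hdiff : ∀ᶠ t in nhds (0:ℝ), DifferentiableAt ℝ g t)
    (hA : HasDerivAt (deriv g) A 0)
    (hmax : IsLocalMax g 0) : A ≤ 0 := by
  by_contra hpos
  push_neg at hpos
  have h0 : deriv g 0 = 0 := hmax.deriv_eq_zero
  have hslope := hasDerivAt_iff_tendsto_slope.1 hA
  have hmono : Tendsto (slope (deriv g) 0) (nhdsWithin (0:ℝ) (Set.Ioi 0)) (nhds A) :=
    hslope.mono_left (nhdsWithin_mono _ (fun x hx hx0 => by
      simp only [Set.mem_Ioi] at hx; simp only [Set.mem_singleton_iff] at hx0; linarith))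
  have hev : ∀ᶠ t in nhdsWithin (0:ℝ) (Set.Ioi 0), 0 < deriv g t := by
    filter_upwards [hmono.eventually (eventually_gt_nhds hpos), self_mem_nhdsWithin]
      with t ht ht0
    have ht0' : (0:ℝ) < t := ht0
    have hs : slope (deriv g) 0 t = deriv g t / t := by
      rw [slope_def_field, h0]; ring
    rw [hs] at ht
    have : deriv g t = (deriv g t / t) * t := (div_mul_cancel₀ _ (ne_of_gt ht0')).symm
    rw [this]; exact mul_pos ht ht0'
  rw [eventually_nhdsWithin_iff] at hev
  obtain ⟨d1, hd1, Hd1⟩ := Metric.eventually_nhds_iff.1 hev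
  obtain ⟨d2, hd2, Hd2⟩ := Metric.eventually_nhds_iff.1 hdiff
  obtain ⟨d3, hd3, Hd3⟩ := Metric.eventually_nhds_iff.1 hmax
  set t0 : ℝ := min (min d1 d2) d3 / 2 with ht0def
  have hm1 : min (min d1 d2) d3 ≤ d1 := le_trans (min_le_left _ _) (min_le_left _ _)
  have hm2 : min (min d1 d2) d3 ≤ d2 := le_trans (min_le_left _ _) (min_le_right _ _)
  have hm3 : min (min d1 d2) d3 ≤ d3 := min_le_right _ _
  have hminpos : 0 < min (min d1 d2) d3 := lt_min (lt_min hd1 hd2) hd3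
  have ht0pos : 0 < t0 := by positivity
  have hdist : ∀ x : ℝ, 0 ≤ x → x ≤ t0 → dist x 0 < min (min d1 d2) d3 := by
    intro x hx1 hx2
    rw [Real.dist_eq, sub_zero, abs_of_nonneg hx1]
    linarith
  have hcont : ContinuousOn g (Set.Icc 0 t0) := fun x hx =>
    (Hd2 (lt_of_lt_of_le (hdist x hx.1 hx.2) hm2)).continuousAt.continuousWithinAt
  have hdiff' : DifferentiableOn ℝ g (Set.Ioo 0 t0) := fun x hx =>
    DifferentiableAt.differentiableWithinAt <|
    Hd2 (lt_of_lt_of_le (hdist x hx.1.le hx.2.le) hm2)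
  obtain ⟨c, hc, hceq⟩ := exists_deriv_eq_slope g ht0pos hcont hdiff'
  have hgle : g t0 ≤ g 0 := Hd3 (lt_of_lt_of_le (hdist t0 ht0pos.le le_rfl) hm3)
  have hcpos : 0 < deriv g c :=
    Hd1 (lt_of_lt_of_le (hdist c hc.1.le (le_trans hc.2.le le_rfl)) hm1) hc.1
  rw [hceq] at hcpos
  have : (g t0 - g 0) / (t0 - 0) ≤ 0 := by
    apply div_nonpos_of_nonpos_of_nonneg <;> linarith
  linarith

/-- The directional derivative function of a `C²` function is differentiable. -/
lemma aux_diff {u : ℂ → ℝ} {z : ℂ} (hu : ContDiffAt ℝ 2 u z) (v : ℂ) :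
    DifferentiableAt ℝ (fun w => fderiv ℝ u w v) z := by
  have hfd : ContDiffAt ℝ 1 (fderiv ℝ u) z := hu.fderiv_right (le_refl _)
  exact ((ContinuousLinearMap.apply ℝ ℝ v).contDiff.contDiffAt.comp z hfd).differentiableAt one_ne_zero

/-- Second directional derivative is nonpositive at an interior local max. -/
lemma dir_second_nonpos (u : ℂ → ℝ) (z v : ℂ)
    (hu : ContDiffAt ℝ 2 u z) (hmax : IsLocalMax u z) :
    fderiv ℝ (fun w => fderiv ℝ u w v) z v ≤ 0 := by
  set L : ℝ → ℂ := fun t => z + t • v with hLdef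
  have hL : ∀ t : ℝ, HasDerivAt L v t := fun t => by
    simpa [hLdef] using ((hasDerivAt_id t).smul_const v).const_add z
  have hL0 : L 0 = z := by simp [hLdef]
  have hLcont : Continuous L := by fun_prop
  set φ : ℂ → ℝ := fun w => fderiv ℝ u w v with hφdef
  have hφdiff : DifferentiableAt ℝ φ z := aux_diff hu v
  have huev : ∀ᶠ w in nhds z, DifferentiableAt ℝ u w := by
    filter_upwards [hu.eventually (by norm_num)] with w hw
    exact hw.differentiableAt (by norm_num)
  set g : ℝ → ℝ := fun t => u (L t) with hgdef
  have hgev : ∀ᶠ t in nhds (0:ℝ), HasDerivAt g (φ (L t)) t := by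
    have : ∀ᶠ t in nhds (0:ℝ), DifferentiableAt ℝ u (L t) :=
      (hLcont.continuousAt (x := 0)).eventually (by rw [hL0]; exact huev)
    filter_upwards [this] with t ht
    exact ht.hasFDerivAt.comp_hasDerivAt t (hL t)
  have hgdiff : ∀ᶠ t in nhds (0:ℝ), DifferentiableAt ℝ g t := by
    filter_upwards [hgev] with t ht; exact ht.differentiableAt
  have hderiv_eq : (fun t => deriv g t) =ᶠ[nhds (0:ℝ)] (fun t => φ (L t)) := by
    filter_upwards [hgev] with t ht; exact ht.deriv
  have hψ : HasDerivAt (fun t => φ (L t)) (fderiv ℝ φ z v) 0 := by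
    have hφz : HasFDerivAt φ (fderiv ℝ φ z) (L 0) := hL0 ▸ hφdiff.hasFDerivAt
    exact hφz.comp_hasDerivAt 0 (hL 0)
  have hA : HasDerivAt (deriv g) (fderiv ℝ φ z v) 0 :=
    hψ.congr_of_eventuallyEq hderiv_eq
  have hgmax : IsLocalMax g 0 := by
    have hmax' : IsLocalMax u (L 0) := by rwa [hL0]
    exact hmax'.comp_continuous (hLcont.continuousAt (x := (0:ℝ)))
  exact second_deriv_nonpos_1d hgdiff hA hgmax

/-- The Laplacian is nonpositive at an interior local max of a `C²` function. -/
lemma laplacian_nonpos {u : ℂ → ℝ} {z : ℂ}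
    (hu : ContDiffAt ℝ 2 u z) (hmax : IsLocalMax u z) : laplacian u z ≤ 0 := by
  have h1 := dir_second_nonpos u z 1 hu hmax
  have h2 := dir_second_nonpos u z Complex.I hu hmax
  rw [laplacian]; linarith

/-- Additivity of the Laplacian for `C²` functions. -/
lemma laplacian_add {f g : ℂ → ℝ} {z : ℂ}
    (hf : ContDiffAt ℝ 2 f z) (hg : ContDiffAt ℝ 2 g z) :
    laplacian (fun w => f w + g w) z = laplacian f z + laplacian g z := by
  have hev : ∀ᶠ w in nhds z, DifferentiableAt ℝ f w ∧ DifferentiableAt ℝ g w := by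
    filter_upwards [hf.eventually (by norm_num), hg.eventually (by norm_num)] with w h1 h2
    exact ⟨h1.differentiableAt (by norm_num), h2.differentiableAt (by norm_num)⟩
  have key : ∀ v : ℂ, fderiv ℝ (fun w => fderiv ℝ (fun w => f w + g w) w v) z v
      = fderiv ℝ (fun w => fderiv ℝ f w v) z v + fderiv ℝ (fun w => fderiv ℝ g w v) z v := by
    intro v
    have heq : (fun w => fderiv ℝ (fun w => f w + g w) w v)
        =ᶠ[nhds z] (fun w => fderiv ℝ f w v + fderiv ℝ g w v) := by
      filter_upwards [hev] with w ⟨h1, h2⟩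
      rw [fderiv_fun_add h1 h2]; rfl
    rw [Filter.EventuallyEq.fderiv_eq heq, fderiv_fun_add (aux_diff hf v) (aux_diff hg v)]
    rfl
  simp only [laplacian, key 1, key Complex.I]
  ring

lemma hasFDerivAt_normSq (w : ℂ) :
    HasFDerivAt Complex.normSq
      ((2*w.re) • (Complex.reCLM : ℂ →L[ℝ] ℝ) + (2*w.im) • (Complex.imCLM : ℂ →L[ℝ] ℝ)) w := by
  have h1 : HasFDerivAt (fun z : ℂ => z.re) (Complex.reCLM : ℂ →L[ℝ] ℝ) w :=
    Complex.reCLM.hasFDerivAt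
  have h2 : HasFDerivAt (fun z : ℂ => z.im) (Complex.imCLM : ℂ →L[ℝ] ℝ) w :=
    Complex.imCLM.hasFDerivAt
  have h := (h1.mul h1).add (h2.mul h2)
  have hfun : (Complex.normSq : ℂ → ℝ) = fun z : ℂ => z.re * z.re + z.im * z.im :=
    funext fun z => Complex.normSq_apply z
  rw [hfun]
  exact h.congr_fderiv (by rw [two_mul, add_smul, two_mul, add_smul])

/-- The Laplacian of `log (r² − |w|²)`. -/
lemma laplacian_log_factor (r : ℝ) (z : ℂ) (h : Complex.normSq z < r^2) :
    laplacian (fun w => Real.log (r^2 - Complex.normSq w)) z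
      = -(4*r^2) / (r^2 - Complex.normSq z)^2 := by
  set u : ℂ → ℝ := fun w => Real.log (r^2 - Complex.normSq w) with hu
  have hopen : IsOpen {w : ℂ | Complex.normSq w < r^2} :=
    isOpen_lt Complex.continuous_normSq continuous_const
  have hmem : {w : ℂ | Complex.normSq w < r^2} ∈ nhds z := hopen.mem_nhds h
  have hG : ∀ w : ℂ, HasFDerivAt (fun w => r^2 - Complex.normSq w)
      ((0:ℂ →L[ℝ] ℝ) - ((2*w.re) • (Complex.reCLM : ℂ →L[ℝ] ℝ) + (2*w.im) • Complex.imCLM)) w :=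
    fun w => (hasFDerivAt_const (r^2) w).sub (hasFDerivAt_normSq w)
  have hlog : ∀ w : ℂ, Complex.normSq w < r^2 → HasFDerivAt u
      ((r^2 - Complex.normSq w)⁻¹ • ((0:ℂ →L[ℝ] ℝ) -
        ((2*w.re) • (Complex.reCLM : ℂ →L[ℝ] ℝ) + (2*w.im) • Complex.imCLM))) w := by
    intro w hw
    exact (Real.hasDerivAt_log (by linarith : r^2 - Complex.normSq w ≠ 0)).comp_hasFDerivAt w (hG w)
  have key1 : ∀ᶠ w in nhds z, fderiv ℝ u w 1 = (-2*w.re) * (r^2 - Complex.normSq w)⁻¹ := by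
    filter_upwards [hmem] with w hw
    rw [(hlog w hw).fderiv]
    simp [Complex.one_re, Complex.one_im]
    ring
  have key2 : ∀ᶠ w in nhds z, fderiv ℝ u w Complex.I
      = (-2*w.im) * (r^2 - Complex.normSq w)⁻¹ := by
    filter_upwards [hmem] with w hw
    rw [(hlog w hw).fderiv]
    simp [Complex.I_re, Complex.I_im]
    ring
  have hGz : (0:ℝ) < r^2 - Complex.normSq z := by linarith
  have hinv : HasFDerivAt (fun w => (r^2 - Complex.normSq w)⁻¹)
      ((-((r^2 - Complex.normSq z)^2)⁻¹) • ((0:ℂ →L[ℝ] ℝ) -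
        ((2*z.re) • (Complex.reCLM : ℂ →L[ℝ] ℝ) + (2*z.im) • Complex.imCLM))) z :=
    (hasDerivAt_inv (by linarith : r^2 - Complex.normSq z ≠ 0)).comp_hasFDerivAt z (hG z)
  have hc1 : HasFDerivAt (fun w : ℂ => -2*w.re) ((-2:ℝ) • (Complex.reCLM : ℂ →L[ℝ] ℝ)) z := by
    exact Complex.reCLM.hasFDerivAt.const_mul (-2:ℝ)
  have hc2 : HasFDerivAt (fun w : ℂ => -2*w.im) ((-2:ℝ) • (Complex.imCLM : ℂ →L[ℝ] ℝ)) z := by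
    exact Complex.imCLM.hasFDerivAt.const_mul (-2:ℝ)
  have hχ1 := hc1.fun_mul hinv
  have hχ2 := hc2.fun_mul hinv
  have e1 : fderiv ℝ (fun w => fderiv ℝ u w 1) z 1
      = fderiv ℝ (fun w => (-2*w.re) * (r^2 - Complex.normSq w)⁻¹) z 1 := by
    rw [Filter.EventuallyEq.fderiv_eq key1]
  have e2 : fderiv ℝ (fun w => fderiv ℝ u w Complex.I) z Complex.I
      = fderiv ℝ (fun w => (-2*w.im) * (r^2 - Complex.normSq w)⁻¹) z Complex.I := by
    rw [Filter.EventuallyEq.fderiv_eq key2]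
  rw [laplacian, e1, e2, hχ1.fderiv, hχ2.fderiv]
  simp [Complex.one_re, Complex.one_im, Complex.I_re, Complex.I_im]
  have hne : r^2 - Complex.normSq z ≠ 0 := by linarith
  rw [Complex.normSq_apply] at *
  field_simp
  ring

lemma contDiffAt_normSq (z : ℂ) : ContDiffAt ℝ 2 Complex.normSq z := by
  have hfun : (Complex.normSq : ℂ → ℝ) = fun z : ℂ => z.re * z.re + z.im * z.im :=
    funext fun z => Complex.normSq_apply z
  rw [hfun]
  exact ((Complex.reCLM.contDiff.mul Complex.reCLM.contDiff).add
    (Complex.imCLM.contDiff.mul Complex.imCLM.contDiff)).contDiffAt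

/-- **Ahlfors' extension of the Schwarz lemma.** Let `ds = p(z)|dz|` be a conformal
metric on the unit disk, `p` continuous and positive, such that at every point there is
a supporting metric (`C²`, touching `p` from below) of Gaussian curvature `≤ −1`.
Then `ds` is dominated by the Poincaré metric: `p(z) ≤ 2/(1−|z|²)`. -/
theorem ahlfors_schwarz (p : ℂ → ℝ)
    (hp : ContinuousOn p (ball (0:ℂ) 1))
    (hppos : ∀ z ∈ ball (0:ℂ) 1, 0 < p z)
    (hsupp : ∀ z₀ ∈ ball (0:ℂ) 1, ∃ (U : Set ℂ) (p' : ℂ → ℝ),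
      U ∈ nhds z₀ ∧ U ⊆ ball (0:ℂ) 1 ∧ ContDiffOn ℝ 2 p' U ∧
      (∀ z ∈ U, 0 < p' z) ∧ p' z₀ = p z₀ ∧ (∀ z ∈ U, p' z ≤ p z) ∧
      gaussCurvature p' z₀ ≤ -1) :
    ∀ z ∈ ball (0:ℂ) 1, p z ≤ 2 / (1 - ‖z‖ ^ 2) := by
  -- Main step: for every 0 < r < 1 the rescaled bound holds on the closed ball of radius r.
  have key : ∀ r : ℝ, 0 < r → r < 1 →
      ∀ w ∈ closedBall (0:ℂ) r, p w * (r^2 - Complex.normSq w) ≤ 2*r := by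
    intro r hr0 hr1 w hw
    set F : ℂ → ℝ := fun w => p w * (r^2 - Complex.normSq w) with hF
    have hsub : closedBall (0:ℂ) r ⊆ ball (0:ℂ) 1 := closedBall_subset_ball hr1
    have hFcont : ContinuousOn F (closedBall (0:ℂ) r) :=
      (hp.mono hsub).mul ((continuous_const.sub Complex.continuous_normSq).continuousOn)
    obtain ⟨z₀, hz₀mem, hz₀max⟩ := (isCompact_closedBall (0:ℂ) r).exists_isMaxOn
      ⟨0, mem_closedBall_self hr0.le⟩ hFcont
    by_cases hM : F z₀ ≤ 2*r
    · exact le_trans (hz₀max hw) hM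
    push_neg at hM
    exfalso
    have hMpos : 0 < F z₀ := lt_trans (by positivity) hM
    have hMpos' : 0 < p z₀ * (r^2 - Complex.normSq z₀) := hMpos
    have hz₀G : 0 < r^2 - Complex.normSq z₀ := by
      rcases lt_trichotomy (r^2 - Complex.normSq z₀) 0 with h | h | h
      · exfalso
        have hple : p z₀ > 0 := hppos z₀ (hsub hz₀mem)
        nlinarith
      · exfalso; rw [h, mul_zero] at hMpos'; exact lt_irrefl _ hMpos'
      · exact h
    have hz₀ball : z₀ ∈ ball (0:ℂ) r := by
      rw [mem_ball, dist_zero_right]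
      have : Complex.normSq z₀ < r^2 := by linarith
      have h2 : ‖z₀‖^2 < r^2 := by rwa [← Complex.sq_norm] at this
      nlinarith [norm_nonneg z₀]
    have hz₀1 : z₀ ∈ ball (0:ℂ) 1 := hsub hz₀mem
    obtain ⟨U, p', hU, hU1, hp'C2, hp'pos, hp'eq, hp'le, hcurv⟩ := hsupp z₀ hz₀1
    -- the comparison function
    set u : ℂ → ℝ := fun w => Real.log (p' w) + Real.log (r^2 - Complex.normSq w) with hudef
    have hp'z₀ : 0 < p' z₀ := hp'pos z₀ (mem_of_mem_nhds hU)
    -- local max of u at z₀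
    have humax : IsLocalMax u z₀ := by
      have hV : U ∩ ball (0:ℂ) r ∈ nhds z₀ := Filter.inter_mem hU (isOpen_ball.mem_nhds hz₀ball)
      filter_upwards [hV] with w ⟨hwU, hwr⟩
      have hwG : 0 < r^2 - Complex.normSq w := by
        rw [mem_ball, dist_zero_right] at hwr
        have h1 : ‖w‖^2 < r^2 := by nlinarith [norm_nonneg w]
        rw [Complex.sq_norm] at h1
        linarith
      have hp'w : 0 < p' w := hp'pos w hwU
      have hFw : p' w * (r^2 - Complex.normSq w) ≤ p' z₀ * (r^2 - Complex.normSq z₀) := by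
        have h1 : p' w * (r^2 - Complex.normSq w) ≤ p w * (r^2 - Complex.normSq w) :=
          mul_le_mul_of_nonneg_right (hp'le w hwU) hwG.le
        have h2 : F w ≤ F z₀ := hz₀max (ball_subset_closedBall hwr)
        rw [hF] at h2
        rw [hp'eq]
        exact le_trans h1 h2
      have hl : Real.log (p' w * (r^2 - Complex.normSq w))
          ≤ Real.log (p' z₀ * (r^2 - Complex.normSq z₀)) :=
        (Real.log_le_log_iff (by positivity) (by positivity)).2 hFw
      rwa [Real.log_mul (by positivity) (by positivity),
        Real.log_mul (by positivity) (by positivity)] at hl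
    -- regularity of u at z₀
    have hlogp' : ContDiffAt ℝ 2 (fun w => Real.log (p' w)) z₀ :=
      (hp'C2.contDiffAt hU).log (ne_of_gt hp'z₀)
    have hlogG : ContDiffAt ℝ 2 (fun w => Real.log (r^2 - Complex.normSq w)) z₀ :=
      (contDiff_const.contDiffAt.sub (contDiffAt_normSq z₀)).log (by
        have : Complex.normSq z₀ < r^2 := by linarith
        exact ne_of_gt (by linarith))
    have huC2 : ContDiffAt ℝ 2 u z₀ := hlogp'.add hlogG
    -- Laplacian inequality
    have hlap : laplacian u z₀ ≤ 0 := laplacian_nonpos huC2 humax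
    have hsum : laplacian u z₀ = laplacian (fun w => Real.log (p' w)) z₀
        + laplacian (fun w => Real.log (r^2 - Complex.normSq w)) z₀ :=
      laplacian_add hlogp' hlogG
    have hval : laplacian (fun w => Real.log (r^2 - Complex.normSq w)) z₀
        = -(4*r^2) / (r^2 - Complex.normSq z₀)^2 :=
      laplacian_log_factor r z₀ (by linarith)
    have hcurv' : (p' z₀)^2 ≤ laplacian (fun w => Real.log (p' w)) z₀ := by
      rw [gaussCurvature] at hcurv
      have hinv : (p' z₀)⁻¹ ^ 2 > 0 := by positivity
      have h1 : (p' z₀)⁻¹^2 * laplacian (fun w => Real.log (p' w)) z₀ ≥ 1 := by nlinarith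
      have h2 : ((p' z₀)⁻¹)^2 = ((p' z₀)^2)⁻¹ := by
        field_simp
      rw [h2] at h1
      have h3 : (0:ℝ) < (p' z₀)^2 := by positivity
      calc (p' z₀)^2 = (p' z₀)^2 * 1 := by ring
        _ ≤ (p' z₀)^2 * (((p' z₀)^2)⁻¹ * laplacian (fun w => Real.log (p' w)) z₀) :=
            mul_le_mul_of_nonneg_left h1 h3.le
        _ = laplacian (fun w => Real.log (p' w)) z₀ := by field_simp
    -- contradiction
    rw [hsum, hval] at hlap
    have hG2 : 0 < (r^2 - Complex.normSq z₀)^2 := by positivity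
    have h4 : (p' z₀)^2 * (r^2 - Complex.normSq z₀)^2 ≤ 4*r^2 := by
      have := hcurv'
      have h5 : (p' z₀)^2 ≤ (4*r^2) / (r^2 - Complex.normSq z₀)^2 := by
        have : (p' z₀)^2 - (4*r^2) / (r^2 - Complex.normSq z₀)^2 ≤ 0 := by
          have hd : -(4*r^2) / (r^2 - Complex.normSq z₀)^2
              = -((4*r^2) / (r^2 - Complex.normSq z₀)^2) := by ring
          rw [hd] at hlap
          linarith
        linarith
      calc (p' z₀)^2 * (r^2 - Complex.normSq z₀)^2
          ≤ ((4*r^2) / (r^2 - Complex.normSq z₀)^2) * (r^2 - Complex.normSq z₀)^2 :=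
            mul_le_mul_of_nonneg_right h5 hG2.le
        _ = 4*r^2 := by field_simp
    have hFz₀ : F z₀ = p' z₀ * (r^2 - Complex.normSq z₀) := by rw [hF, hp'eq]
    have : (F z₀)^2 ≤ (2*r)^2 := by
      rw [hFz₀]
      calc (p' z₀ * (r^2 - Complex.normSq z₀))^2
          = (p' z₀)^2 * (r^2 - Complex.normSq z₀)^2 := by ring
        _ ≤ 4*r^2 := h4
        _ = (2*r)^2 := by ring
    nlinarith
  -- Take the limit r → 1⁻.
  intro z hz
  rw [mem_ball, dist_zero_right] at hz
  have hNz : Complex.normSq z < 1 := by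
    have : ‖z‖^2 < 1 := by nlinarith [norm_nonneg z]
    rwa [Complex.sq_norm] at this
  have hNz0 : (0:ℝ) ≤ Complex.normSq z := Complex.normSq_nonneg z
  have hgoal : p z ≤ 2 / (1 - Complex.normSq z) := by
    have hIoo : Set.Ioo ‖z‖ 1 ∈ nhdsWithin (1:ℝ) (Set.Iio 1) :=
      Ioo_mem_nhdsLT_of_mem ⟨hz, le_rfl⟩
    have hevent : ∀ᶠ r in nhdsWithin (1:ℝ) (Set.Iio 1),
        p z ≤ 2*r / (r^2 - Complex.normSq z) := by
      filter_upwards [hIoo] with r hr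
      have hr0 : 0 < r := lt_of_le_of_lt (norm_nonneg z) hr.1
      have hrz : Complex.normSq z < r^2 := by
        have : ‖z‖^2 < r^2 := by nlinarith [norm_nonneg z, hr.1]
        rwa [Complex.sq_norm] at this
      have hzball : z ∈ closedBall (0:ℂ) r := by
        rw [mem_closedBall, dist_zero_right]; exact hr.1.le
      have := key r hr0 hr.2 z hzball
      rw [le_div_iff₀ (by linarith)]
      linarith
    have htend : Filter.Tendsto (fun r : ℝ => 2*r / (r^2 - Complex.normSq z))
        (nhdsWithin (1:ℝ) (Set.Iio 1)) (nhds (2 / (1 - Complex.normSq z))) := by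
      have hcont : ContinuousAt (fun r : ℝ => 2*r / (r^2 - Complex.normSq z)) 1 := by
        apply ContinuousAt.div
        · fun_prop
        · fun_prop
        · simp; intro h; nlinarith
      have := hcont.tendsto.mono_left (nhdsWithin_le_nhds (s := Set.Iio (1:ℝ)))
      simpa using this
    exact ge_of_tendsto htend hevent
  have : (1:ℝ) - ‖z‖^2 = 1 - Complex.normSq z := by
    rw [Complex.sq_norm]
  rw [this]
  exact hgoal
end

section
/- The complex plane ℂ, equipped with any conformal Riemannian metric ds = p(z)|dz| with p continuous and positive and with locally finite area, is regularly exhaustible: there exists an increasing sequence of radii r_j → ∞ such that L(r_j)/A(r_j) → 0, where L(r) is the ds-length of the circle |z| = r and A(r) is the ds-area of the disk |z| ≤ r (assumed to tend to infinity). -/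
open MeasureTheory Filter Metric

/-- The length of the circle `|z| = r` in the conformal metric `ds = p(z)|dz|`. -/
noncomputable def circleLen (p : ℂ → ℝ) (r : ℝ) : ℝ :=
  ∫ θ in (0:ℝ)..(2 * Real.pi), p (r * Complex.exp (θ * Complex.I)) * r

/-- The area of the disk `|z| ≤ r` in the conformal metric `ds = p(z)|dz|`
(with area element `p² dm`). -/
noncomputable def diskArea (p : ℂ → ℝ) (r : ℝ) : ℝ :=
  ∫ z in Metric.closedBall (0:ℂ) r, p z ^ 2

-- Cauchy-Schwarz for interval integrals of continuous functions
private lemma cs_aux (f : ℝ → ℝ) (hf : Continuous f) (a b : ℝ) (hab : a < b) :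
    (∫ x in a..b, f x) ^ 2 ≤ (b - a) * ∫ x in a..b, f x ^ 2 := by
  set m := b - a with hm
  have hm0 : 0 < m := by simp only [hm]; linarith
  set I := ∫ x in a..b, f x with hI
  set t := I / m with ht
  have htm : t * m = I := by rw [ht, div_mul_cancel₀ I hm0.ne']
  have h1 : IntervalIntegrable (fun x => f x ^ 2) volume a b :=
    (hf.pow 2).intervalIntegrable a b
  have h2 : IntervalIntegrable (fun x => 2 * t * f x) volume a b :=
    (continuous_const.mul hf).intervalIntegrable a b
  have h0 : (0:ℝ) ≤ ∫ x in a..b, (f x - t) ^ 2 :=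
    intervalIntegral.integral_nonneg hab.le (fun x _ => sq_nonneg _)
  have hexp : ∫ x in a..b, (f x - t) ^ 2
      = (∫ x in a..b, f x ^ 2) - 2 * t * I + m * t ^ 2 := by
    have hpt : ∀ x, (f x - t) ^ 2 = f x ^ 2 - 2 * t * f x + t ^ 2 := fun x => by ring
    simp_rw [hpt]
    rw [intervalIntegral.integral_add (h1.sub h2) intervalIntegrable_const,
      intervalIntegral.integral_sub h1 h2, intervalIntegral.integral_const_mul,
      intervalIntegral.integral_const]
    simp only [← hI, ← hm, smul_eq_mul]
  rw [hexp] at h0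
  nlinarith [h0, htm, hm0]

private lemma polar_symm_eq (q : ℝ × ℝ) :
    Complex.polarCoord.symm q = (q.1 : ℂ) * Complex.exp (q.2 * Complex.I) := by
  rw [Complex.polarCoord_symm_apply, Complex.exp_mul_I, Complex.ofReal_cos, Complex.ofReal_sin]

private lemma circleLen_eq (p : ℂ → ℝ) (r : ℝ) :
    circleLen p r = ∫ θ in (-Real.pi)..Real.pi, p (r * Complex.exp (θ * Complex.I)) * r := by
  have hper : Function.Periodic
      (fun θ : ℝ => p (r * Complex.exp (θ * Complex.I)) * r) (2 * Real.pi) := by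
    intro x
    simp only
    congr 3
    rw [Complex.ofReal_add, add_mul, Complex.exp_add]
    have : Complex.exp ((2 * Real.pi : ℝ) * Complex.I) = 1 := by
      push_cast
      exact Complex.exp_two_pi_mul_I
    rw [this, mul_one]
  have h := hper.intervalIntegral_add_eq 0 (-Real.pi)
  rw [circleLen]
  rw [zero_add] at h
  rw [h]
  congr 1
  ring

private lemma diskArea_integrableOn (p : ℂ → ℝ) (hp : Continuous p) (r : ℝ) :
    IntegrableOn (fun z => p z ^ 2) (closedBall (0:ℂ) r) :=
  (hp.pow 2).continuousOn.integrableOn_compact (isCompact_closedBall _ _)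

private lemma diskArea_mono (p : ℂ → ℝ) (hp : Continuous p) {a b : ℝ} (hab : a ≤ b) :
    diskArea p a ≤ diskArea p b := by
  apply setIntegral_mono_set (diskArea_integrableOn p hp b)
  · exact Filter.Eventually.of_forall fun z => sq_nonneg _
  · exact HasSubset.Subset.eventuallyLE (closedBall_subset_closedBall hab)

private lemma diskArea_pos (p : ℂ → ℝ) (hp : Continuous p) (hppos : ∀ z, 0 < p z)
    {r : ℝ} (hr : 0 < r) : 0 < diskArea p r := by
  rw [diskArea, setIntegral_pos_iff_support_of_nonneg_ae
      (Filter.Eventually.of_forall fun z => sq_nonneg _) (diskArea_integrableOn p hp r)]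
  have : Function.support (fun z : ℂ => p z ^ 2) = Set.univ := by
    ext z; simp [Function.support, (hppos z).ne']
  rw [this, Set.univ_inter]
  exact measure_closedBall_pos _ _ hr

private lemma diskArea_diff (p : ℂ → ℝ) (hp : Continuous p) {a b : ℝ} (hab : a ≤ b) :
    diskArea p b - diskArea p a
      = ∫ z in closedBall (0:ℂ) b \ closedBall (0:ℂ) a, p z ^ 2 := by
  rw [integral_diff measurableSet_closedBall (diskArea_integrableOn p hp b)
    (closedBall_subset_closedBall hab)]
  rfl

private lemma vol_diff_toReal {a b : ℝ} (ha : 0 ≤ a) (hab : a ≤ b) :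
    (volume (closedBall (0:ℂ) b \ closedBall (0:ℂ) a)).toReal
      = Real.pi * b ^ 2 - Real.pi * a ^ 2 := by
  rw [measure_diff (closedBall_subset_closedBall hab)
    measurableSet_closedBall.nullMeasurableSet measure_closedBall_lt_top.ne,
    Complex.volume_closedBall, Complex.volume_closedBall,
    ENNReal.toReal_sub_of_le]
  · rw [ENNReal.toReal_mul, ENNReal.toReal_mul, ENNReal.toReal_pow, ENNReal.toReal_pow,
      ENNReal.toReal_ofReal (ha.trans hab), ENNReal.toReal_ofReal ha, ENNReal.coe_toReal,
      NNReal.coe_real_pi]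
    ring
  · exact mul_le_mul_left (pow_le_pow_left' (ENNReal.ofReal_le_ofReal hab) 2) _
  · exact (ENNReal.mul_lt_top (ENNReal.pow_lt_top ENNReal.ofReal_lt_top) ENNReal.coe_lt_top).ne

private lemma diskArea_continuousOn (p : ℂ → ℝ) (hp : Continuous p) {R : ℝ} (hR : 0 ≤ R) :
    ContinuousOn (diskArea p) (Set.Icc 0 R) := by
  obtain ⟨C, hC⟩ := (isCompact_closedBall (0:ℂ) R).exists_bound_of_continuousOn
    (hp.pow 2).continuousOn
  set C₀ : ℝ := max C 0 with hC₀
  have hC₀0 : 0 ≤ C₀ := le_max_right _ _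
  have key : ∀ u v, u ∈ Set.Icc 0 R → v ∈ Set.Icc 0 R → u ≤ v →
      diskArea p v - diskArea p u ≤ C₀ * (2 * Real.pi * R) * (v - u) := by
    intro u v hu hv huv
    rw [diskArea_diff p hp huv]
    have hbound : ∀ z ∈ closedBall (0:ℂ) v \ closedBall (0:ℂ) u, ‖p z ^ 2‖ ≤ C₀ := by
      intro z hz
      exact le_trans (hC z (closedBall_subset_closedBall hv.2 hz.1)) (le_max_left _ _)
    have hfin : volume (closedBall (0:ℂ) v \ closedBall (0:ℂ) u) < ⊤ :=
      lt_of_le_of_lt (measure_mono Set.diff_subset)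
        (measure_closedBall_lt_top (x := (0:ℂ)) (r := v))
    have h1 := norm_setIntegral_le_of_norm_le_const hfin hbound
    have h2 : ∫ z in closedBall (0:ℂ) v \ closedBall (0:ℂ) u, p z ^ 2
        ≤ C₀ * (volume (closedBall (0:ℂ) v \ closedBall (0:ℂ) u)).toReal :=
      le_trans (le_abs_self _) h1
    rw [vol_diff_toReal hu.1 huv] at h2
    have hπ := Real.pi_pos
    have h4 : (v + u) * (v - u) ≤ (2 * R) * (v - u) :=
      mul_le_mul_of_nonneg_right (by linarith [hu.1, hv.2]) (by linarith)
    have h5 := mul_le_mul_of_nonneg_left h4 (mul_nonneg hC₀0 hπ.le)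
    nlinarith [h2, h5]
  have hmono : ∀ u v, u ∈ Set.Icc 0 R → v ∈ Set.Icc 0 R → u ≤ v →
      diskArea p u ≤ diskArea p v := fun u v _ _ huv => diskArea_mono p hp huv
  set K : NNReal := (C₀ * (2 * Real.pi * R)).toNNReal with hK
  have hKc : (K : ℝ) = max (C₀ * (2 * Real.pi * R)) 0 := by
    rw [hK, Real.coe_toNNReal']
  apply LipschitzOnWith.continuousOn (K := K)
  apply LipschitzOnWith.of_dist_le_mul
  intro x hx y hy
  rw [Real.dist_eq, Real.dist_eq, hKc]
  rcases le_total x y with h | h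
  · rw [abs_of_nonpos (by linarith [hmono x y hx hy h]), abs_of_nonpos (by linarith)]
    calc -(diskArea p x - diskArea p y) = diskArea p y - diskArea p x := by ring
    _ ≤ C₀ * (2 * Real.pi * R) * (y - x) := key x y hx hy h
    _ ≤ max (C₀ * (2 * Real.pi * R)) 0 * -(x - y) := by
        apply mul_le_mul_of_nonneg_right (le_max_left _ _) (by linarith)
        |>.trans_eq (by ring)
  · rw [abs_of_nonneg (by linarith [hmono y x hy hx h]), abs_of_nonneg (by linarith)]
    calc diskArea p x - diskArea p y ≤ C₀ * (2 * Real.pi * R) * (x - y) := key y x hy hx h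
    _ ≤ max (C₀ * (2 * Real.pi * R)) 0 * (x - y) :=
        mul_le_mul_of_nonneg_right (le_max_left _ _) (by linarith)

private lemma exists_double (p : ℂ → ℝ) (hp : Continuous p) (hppos : ∀ z, 0 < p z)
    (harea : Tendsto (fun r => diskArea p r) atTop atTop) {x : ℝ} (hx : 0 < x) :
    ∃ y, x < y ∧ diskArea p y = 2 * diskArea p x := by
  have hAx : 0 < diskArea p x := diskArea_pos p hp hppos hx
  obtain ⟨b, hb⟩ := (tendsto_atTop.1 harea (2 * diskArea p x)).exists_forall_of_atTop
  set b' : ℝ := max b x with hb'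
  have hxb' : x ≤ b' := le_max_right _ _
  have hAb' : 2 * diskArea p x ≤ diskArea p b' := hb _ (le_max_left _ _)
  have hcont : ContinuousOn (diskArea p) (Set.Icc x b') :=
    (diskArea_continuousOn p hp (le_trans hx.le hxb')).mono
      (Set.Icc_subset_Icc_left hx.le)
  have hmem : 2 * diskArea p x ∈ Set.Icc (diskArea p x) (diskArea p b') :=
    ⟨by linarith, hAb'⟩
  obtain ⟨y, hy, hyA⟩ := intermediate_value_Icc hxb' hcont hmem
  refine ⟨y, ?_, hyA⟩
  rcases eq_or_lt_of_le hy.1 with h | h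
  · exfalso; rw [← h] at hyA; linarith
  · exact h

private lemma annulus_bound (p : ℂ → ℝ) (hp : Continuous p) {a b c : ℝ}
    (ha : 0 < a) (hab : a ≤ b) (hc : 0 ≤ c)
    (hL : ∀ r ∈ Set.Ioc a b, c ≤ circleLen p r) :
    c ^ 2 / (2 * Real.pi) * (Real.log b - Real.log a) ≤ diskArea p b - diskArea p a := by
  have hπ := Real.pi_pos
  set S : Set (ℝ × ℝ) := Set.Ioc a b ×ˢ Set.Ioo (-Real.pi) Real.pi with hS
  set F : ℝ × ℝ → ℝ := fun q => q.1 * p ((q.1 : ℂ) * Complex.exp (q.2 * Complex.I)) ^ 2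
    with hF
  have hFc : Continuous F := by
    apply continuous_fst.mul
    apply (hp.comp ?_).pow 2
    exact (Complex.continuous_ofReal.comp continuous_fst).mul
      (Complex.continuous_exp.comp
        ((Complex.continuous_ofReal.comp continuous_snd).mul continuous_const))
  -- Step 1: diskArea difference equals integral of F over S
  have step1 : diskArea p b - diskArea p a = ∫ q in S, F q := by
    rw [diskArea_diff p hp hab]
    have hdm : MeasurableSet (closedBall (0:ℂ) b \ closedBall (0:ℂ) a) :=
      measurableSet_closedBall.diff measurableSet_closedBall
    rw [← integral_indicator hdm, ← Complex.integral_comp_polarCoord_symm]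
    have hSm : MeasurableSet S :=
      measurableSet_Ioc.prod measurableSet_Ioo
    rw [← integral_indicator polarCoord.open_target.measurableSet,
        ← integral_indicator hSm]
    congr 1
    funext q
    have habs : ‖Complex.polarCoord.symm q‖ = |q.1| := Complex.norm_polarCoord_symm q
    by_cases hq1 : q ∈ S
    · have hq1' : q.1 ∈ Set.Ioc a b := hq1.1
      have hqt : q ∈ polarCoord.target := by
        rw [polarCoord_target]
        exact ⟨lt_trans ha hq1'.1, hq1.2⟩
      rw [Set.indicator_of_mem hqt, Set.indicator_of_mem hq1]
      have hmem : Complex.polarCoord.symm q ∈ closedBall (0:ℂ) b \ closedBall (0:ℂ) a := by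
        constructor
        · rw [mem_closedBall, dist_zero_right, habs,
            abs_of_pos (lt_trans ha hq1'.1)]
          exact hq1'.2
        · rw [mem_closedBall, dist_zero_right, habs,
            abs_of_pos (lt_trans ha hq1'.1)]
          exact not_le.2 hq1'.1
      rw [Set.indicator_of_mem hmem, smul_eq_mul, hF, polar_symm_eq]
    · by_cases hqt : q ∈ polarCoord.target
      · rw [Set.indicator_of_mem hqt, Set.indicator_of_notMem hq1]
        have hq1pos : 0 < q.1 := by
          rw [polarCoord_target] at hqt; exact hqt.1
        have hnot : Complex.polarCoord.symm q ∉ closedBall (0:ℂ) b \ closedBall (0:ℂ) a := by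
          intro hmem
          apply hq1
          rw [polarCoord_target] at hqt
          refine ⟨⟨?_, ?_⟩, hqt.2⟩
          · have := hmem.2
            rw [mem_closedBall, dist_zero_right, habs,
              abs_of_pos hq1pos] at this
            exact not_le.1 this
          · have := hmem.1
            rw [mem_closedBall, dist_zero_right, habs,
              abs_of_pos hq1pos] at this
            exact this
        rw [Set.indicator_of_notMem hnot, smul_zero]
      · rw [Set.indicator_of_notMem hqt, Set.indicator_of_notMem hq1]
  -- integrability of F on S
  have hFi : IntegrableOn F S := by
    apply (hFc.continuousOn.integrableOn_compact
      ((isCompact_Icc (a := a) (b := b)).prod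
        (isCompact_Icc (a := -Real.pi) (b := Real.pi)))).mono_set
    exact Set.prod_mono Set.Ioc_subset_Icc_self Set.Ioo_subset_Icc_self
  -- Fubini
  have step2 : ∫ q in S, F q = ∫ r in Set.Ioc a b, ∫ θ in Set.Ioo (-Real.pi) Real.pi,
      F (r, θ) := by
    exact setIntegral_prod F hFi
  -- inner integral function
  set G : ℝ → ℝ := fun r => ∫ θ in Set.Ioo (-Real.pi) Real.pi, F (r, θ) with hG
  have hGi : IntegrableOn G (Set.Ioc a b) := by
    have h' : Integrable F ((volume.restrict (Set.Ioc a b)).prod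
        (volume.restrict (Set.Ioo (-Real.pi) Real.pi))) := by
      rw [Measure.prod_restrict]; exact hFi
    exact h'.integral_prod_left
  have hlow : ∀ r ∈ Set.Ioc a b, c ^ 2 / (2 * Real.pi) * r⁻¹ ≤ G r := by
    intro r hr
    have hr0 : 0 < r := lt_trans ha hr.1
    have hfc : Continuous fun θ : ℝ => p ((r:ℂ) * Complex.exp (θ * Complex.I)) * r := by
      apply Continuous.mul ?_ continuous_const
      exact hp.comp (continuous_const.mul
        (Complex.continuous_exp.comp (Complex.continuous_ofReal.mul continuous_const)))
    have hcs := cs_aux _ hfc (-Real.pi) Real.pi (by linarith)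
    have hLr : c ≤ ∫ θ in (-Real.pi)..Real.pi, p ((r:ℂ) * Complex.exp (θ * Complex.I)) * r := by
      rw [← circleLen_eq]; exact hL r hr
    have hGint : G r = ∫ θ in (-Real.pi)..Real.pi, F (r, θ) := by
      rw [hG, intervalIntegral.integral_of_le (by linarith), integral_Ioc_eq_integral_Ioo]
    have h2 : ∫ θ in (-Real.pi)..Real.pi, (p ((r:ℂ) * Complex.exp (θ * Complex.I)) * r) ^ 2
        = r * G r := by
      have hsq : ∀ θ : ℝ, (p ((r:ℂ) * Complex.exp (θ * Complex.I)) * r) ^ 2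
          = r * (r * p ((r:ℂ) * Complex.exp (θ * Complex.I)) ^ 2) := fun θ => by ring
      simp_rw [hsq]
      rw [intervalIntegral.integral_const_mul, hGint]
    rw [h2] at hcs
    have hc2 : c ^ 2 ≤ (Real.pi - -Real.pi) * (r * G r) :=
      le_trans (pow_le_pow_left₀ hc hLr 2) hcs
    have hrw : c ^ 2 / (2 * Real.pi) * r⁻¹ = c ^ 2 / (2 * Real.pi * r) := by
      field_simp
    rw [hrw, div_le_iff₀ (by positivity)]
    nlinarith [hc2]
  have hfint : IntegrableOn (fun r : ℝ => c ^ 2 / (2 * Real.pi) * r⁻¹) (Set.Ioc a b) := by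
    have hco : ContinuousOn (fun r : ℝ => c ^ 2 / (2 * Real.pi) * r⁻¹) (Set.Icc a b) :=
      continuousOn_const.mul (continuousOn_id.inv₀ fun x hx =>
        (lt_of_lt_of_le ha hx.1).ne')
    exact (hco.integrableOn_compact isCompact_Icc).mono_set Set.Ioc_subset_Icc_self
  have hcomp : ∫ r in Set.Ioc a b, c ^ 2 / (2 * Real.pi) * r⁻¹ ≤ ∫ r in Set.Ioc a b, G r :=
    setIntegral_mono_on hfint hGi measurableSet_Ioc hlow
  have hval : ∫ r in Set.Ioc a b, c ^ 2 / (2 * Real.pi) * r⁻¹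
      = c ^ 2 / (2 * Real.pi) * (Real.log b - Real.log a) := by
    rw [← intervalIntegral.integral_of_le hab, intervalIntegral.integral_const_mul,
      integral_inv_of_pos ha (lt_of_lt_of_le ha hab),
      Real.log_div (ne_of_gt (lt_of_lt_of_le ha hab)) (ne_of_gt ha)]
  rw [step1, step2, ← hval]
  exact hcomp

private lemma exists_small_ratio (p : ℂ → ℝ) (hp : Continuous p) (hppos : ∀ z, 0 < p z)
    (harea : Tendsto (fun r => diskArea p r) atTop atTop) (ε R : ℝ) (hε : 0 < ε) :
    ∃ r, R ≤ r ∧ 1 ≤ r ∧ circleLen p r < ε * diskArea p r := by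
  by_contra hcon
  push_neg at hcon
  -- hcon : ∀ r, R ≤ r → 1 ≤ r → ε * diskArea p r ≤ circleLen p r
  have hπ := Real.pi_pos
  set r₀ : ℝ := max R 1 with hr₀
  have hr₀1 : (1:ℝ) ≤ r₀ := le_max_right _ _
  have hr₀0 : (0:ℝ) < r₀ := lt_of_lt_of_le one_pos hr₀1
  set A₀ : ℝ := diskArea p r₀ with hA₀
  have hA₀0 : 0 < A₀ := diskArea_pos p hp hppos hr₀0
  -- recursive sequence of doubling radii
  have hrec : ∀ x : ℝ, r₀ ≤ x → ∃ y : ℝ, x < y ∧ diskArea p y = 2 * diskArea p x :=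
    fun x hx => exists_double p hp hppos harea (lt_of_lt_of_le hr₀0 hx)
  -- build s : ℕ → {x // r₀ ≤ x}
  let T := {x : ℝ // r₀ ≤ x}
  let step : T → T := fun x =>
    ⟨(hrec x.1 x.2).choose, le_of_lt (lt_of_le_of_lt x.2 (hrec x.1 x.2).choose_spec.1)⟩
  let s : ℕ → T := fun n => step^[n] ⟨r₀, le_rfl⟩
  have hs0 : (s 0).1 = r₀ := rfl
  have hssucc : ∀ n, s (n + 1) = step (s n) := fun n =>
    by simp only [s, Function.iterate_succ_apply']
  have hslt : ∀ n, (s n).1 < (s (n+1)).1 := by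
    intro n; rw [hssucc n]; exact (hrec (s n).1 (s n).2).choose_spec.1
  have hsA : ∀ n, diskArea p (s n).1 = 2 ^ n * A₀ := by
    intro n
    induction n with
    | zero => simp [hs0, hA₀]
    | succ n ih =>
      rw [hssucc n]
      have := (hrec (s n).1 (s n).2).choose_spec.2
      rw [show (step (s n)).1 = (hrec (s n).1 (s n).2).choose from rfl, this, ih]
      ring
  set K : ℝ := 2 * Real.pi / (ε ^ 2 * A₀) with hK
  have hK0 : 0 ≤ K := by positivity
  have hstep : ∀ n, Real.log (s (n+1)).1 - Real.log (s n).1 ≤ K * (1/2) ^ n := by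
    intro n
    set a' := (s n).1
    set b' := (s (n+1)).1
    have ha' : 0 < a' := lt_of_lt_of_le hr₀0 (s n).2
    have hab' : a' ≤ b' := (hslt n).le
    have hAa : diskArea p a' = 2 ^ n * A₀ := hsA n
    have hAb : diskArea p b' = 2 ^ (n+1) * A₀ := hsA (n+1)
    have hAa0 : 0 < diskArea p a' := by rw [hAa]; positivity
    have hball : ∀ r ∈ Set.Ioc a' b', ε * diskArea p a' ≤ circleLen p r := by
      intro r hr
      have hra : a' ≤ r := hr.1.le
      have hrr₀ : r₀ ≤ r := le_trans (s n).2 hra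
      have h1 := hcon r (le_trans (le_max_left _ _) hrr₀) (le_trans hr₀1 hrr₀)
      have h2 : diskArea p a' ≤ diskArea p r := diskArea_mono p hp hra
      nlinarith [h1, h2]
    have hkey := annulus_bound p hp ha' hab'
      (mul_nonneg hε.le hAa0.le) hball
    have hdiff : diskArea p b' - diskArea p a' = diskArea p a' := by
      rw [hAa, hAb]; ring
    rw [hdiff] at hkey
    -- (ε * A a')^2/(2π) * (log b' - log a') ≤ A a'
    have hA2 : (ε * diskArea p a') ^ 2 / (2 * Real.pi) > 0 := by positivity
    have hlog : Real.log b' - Real.log a'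
        ≤ diskArea p a' / ((ε * diskArea p a') ^ 2 / (2 * Real.pi)) := by
      rw [le_div_iff₀ hA2]
      linarith [hkey]
    calc Real.log b' - Real.log a'
        ≤ diskArea p a' / ((ε * diskArea p a') ^ 2 / (2 * Real.pi)) := hlog
      _ = K * (1/2) ^ n := by
          rw [hAa, hK]
          field_simp
          ring_nf
          rw [← mul_pow]
          norm_num
  have htel : ∀ n, Real.log (s n).1 ≤ Real.log r₀ + K * (2 - 2 * (1/2) ^ n) := by
    intro n
    induction n with
    | zero => simp [hs0]
    | succ n ih =>
      have := hstep n
      have hhalf : K * (2 - 2 * (1/2) ^ (n+1)) = K * (2 - 2 * (1/2) ^ n) + K * (1/2) ^ n := by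
        ring
      rw [hhalf]
      linarith
  set M : ℝ := Real.exp (Real.log r₀ + 2 * K) with hM
  have hsM : ∀ n, (s n).1 ≤ M := by
    intro n
    have h1 : Real.log (s n).1 ≤ Real.log r₀ + 2 * K := by
      have h2 := htel n
      have h3 : (0:ℝ) ≤ (1/2:ℝ) ^ n := by positivity
      nlinarith [hK0]
    rw [hM, ← Real.log_le_iff_le_exp (lt_of_lt_of_le hr₀0 (s n).2)]
    exact h1
  have hAM : ∀ n, (2:ℝ) ^ n * A₀ ≤ diskArea p M := by
    intro n
    rw [← hsA n]
    exact diskArea_mono p hp (hsM n)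
  obtain ⟨n, hn⟩ := pow_unbounded_of_one_lt (diskArea p M / A₀) (one_lt_two (α := ℝ))
  have := hAM n
  rw [div_lt_iff₀ hA₀0] at hn
  linarith

private lemma circleLen_nonneg (p : ℂ → ℝ) (hppos : ∀ z, 0 < p z) {r : ℝ} (hr : 0 ≤ r) :
    0 ≤ circleLen p r :=
  intervalIntegral.integral_nonneg (by positivity)
    (fun θ _ => mul_nonneg (hppos _).le hr)

/-- **`ℂ` is regularly exhaustible in any conformal metric.** For any continuous
positive conformal metric `ds = p(z)|dz|` on `ℂ` with locally finite area whose total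
area is infinite, there is a sequence of radii `r_j → ∞` along which
`L(r_j)/A(r_j) → 0`, where `L(r)` is the `ds`-length of `|z| = r` and `A(r)` the
`ds`-area of `{|z| ≤ r}`. -/
theorem complex_plane_regularly_exhaustible (p : ℂ → ℝ)
    (hp : Continuous p) (hppos : ∀ z, 0 < p z)
    (harea : Tendsto (fun r => diskArea p r) atTop atTop) :
    ∃ r : ℕ → ℝ, StrictMono r ∧ Tendsto r atTop atTop ∧
      Tendsto (fun j => circleLen p (r j) / diskArea p (r j)) atTop (nhds 0) := by
  have key : ∀ (n : ℕ) (x : ℝ), ∃ r, x + 1 ≤ r ∧ 1 ≤ r ∧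
      circleLen p r < (1 / (n + 1)) * diskArea p r := by
    intro n x
    exact exists_small_ratio p hp hppos harea (1 / (n + 1)) (x + 1) (by positivity)
  choose F hF1 hF2 hF3 using key
  set r : ℕ → ℝ := fun n => Nat.rec (F 0 0) (fun n prev => F (n + 1) prev) n with hrdef
  have hr0 : r 0 = F 0 0 := rfl
  have hrsucc : ∀ n, r (n + 1) = F (n + 1) (r n) := fun n => rfl
  have hmain : ∀ j, 1 ≤ r j ∧ circleLen p (r j) < (1 / (j + 1)) * diskArea p (r j) := by
    intro j
    cases j with
    | zero => exact ⟨hF2 0 0, hF3 0 0⟩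
    | succ n => rw [hrsucc n]; exact ⟨hF2 (n+1) (r n), hF3 (n+1) (r n)⟩
  have hlt : ∀ n, r n < r (n + 1) := by
    intro n
    rw [hrsucc n]
    linarith [hF1 (n + 1) (r n)]
  refine ⟨r, strictMono_nat_of_lt_succ hlt, ?_, ?_⟩
  · apply tendsto_atTop_mono ?_ tendsto_natCast_atTop_atTop
    intro n
    induction n with
    | zero => simpa using le_trans zero_le_one (hmain 0).1
    | succ n ih =>
      have := hlt n
      push_cast
      have h1 := hF1 (n + 1) (r n)
      rw [hrsucc n]
      linarith
  · have hpos : ∀ j, 0 < diskArea p (r j) :=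
      fun j => diskArea_pos p hp hppos (lt_of_lt_of_le one_pos (hmain j).1)
    apply tendsto_of_tendsto_of_tendsto_of_le_of_le (g := fun _ : ℕ => (0:ℝ))
      (h := fun j : ℕ => 1 / ((j : ℝ) + 1)) tendsto_const_nhds
      tendsto_one_div_add_atTop_nhds_zero_nat
    · intro j
      exact div_nonneg (circleLen_nonneg p hppos
        (le_trans zero_le_one (hmain j).1)) (hpos j).le
    · intro j
      rw [div_le_iff₀ (hpos j)]
      exact le_of_lt (by simpa using (hmain j).2)
end
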